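/- Let α be the interval-valued function on ℝ defined by α(x) = [−1, −1] for x < 0, α(0) = [−1, 1], and α(x) = [1, 1] for x > 0. Define the interval-valued function β on ℝ² by β(x, y) = α(sin(1/(x² + y²))) for (x, y) ≠ (0, 0) and β(0, 0) = [−1, 1]. Then β is Hausdorff-continuous. -/

import Mathlib

/-!
β is `1` on the open set `P` where `sin (1 / (x² + y²)) > 0`, `-1` on the open set `N` where it
is negative, and `[-1, 1]` elsewhere, i.e. on the zero set of `sin (1 / (x² + y²))` and at the
origin. The endpoints of an interval function are s-continuous exactly when they are lower,
resp. upper, semicontinuous; so the lower endpoint of an s-continuous function squeezed inside β is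
`≤ -1` on the closure of `N`, and its upper endpoint is `≥ 1` on the closure of `P`. Minimality
therefore reduces to: every zero of `sin (1 / (x² + y²))` and the origin lie in the closure of both
`P` and `N`. This holds because `sin` changes sign at each of its zeros, and these zeros accumulate
at the origin.
-/

open Filter Topology

/-- The lower Baire operator: `I(g)(x)` is the sup over neighbourhoods `V` of `x`
of the inf of `g` over `V`. -/
noncomputable def lowerBaire {X : Type*} [TopologicalSpace X] (g : X → EReal) (x : X) : EReal :=
  ⨆ V ∈ nhds x, ⨅ y ∈ V, g y

/-- The upper Baire operator: `S(g)(x)` is the inf over neighbourhoods `V` of `x`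
of the sup of `g` over `V`. -/
noncomputable def upperBaire {X : Type*} [TopologicalSpace X] (g : X → EReal) (x : X) : EReal :=
  ⨅ V ∈ nhds x, ⨆ y ∈ V, g y

/-- The pair `(lo, hi)` is an interval-valued function (`lo ≤ hi` pointwise) which is
segment-continuous: `I(lo) = lo` and `S(hi) = hi`. -/
def IsSCont {X : Type*} [TopologicalSpace X] (lo hi : X → EReal) : Prop :=
  (∀ x, lo x ≤ hi x) ∧ lowerBaire lo = lo ∧ upperBaire hi = hi

/-- The pair `(lo, hi)` is a Hausdorff-continuous interval-valued function: it is
s-continuous and minimal among s-continuous interval-valued functions `(glo, ghi)`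
contained in it pointwise. -/
def IsHCont {X : Type*} [TopologicalSpace X] (lo hi : X → EReal) : Prop :=
  IsSCont lo hi ∧
    ∀ glo ghi : X → EReal, IsSCont glo ghi →
      (∀ x, lo x ≤ glo x) → (∀ x, ghi x ≤ hi x) → glo = lo ∧ ghi = hi

open Set

section Baire

variable {X : Type*} [TopologicalSpace X]

theorem lowerBaire_eq_liminf (g : X → EReal) (x : X) : lowerBaire g x = liminf g (𝓝 x) :=
  liminf_eq_iSup_iInf.symm

theorem upperBaire_eq_limsup (g : X → EReal) (x : X) : upperBaire g x = limsup g (𝓝 x) :=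
  limsup_eq_iInf_iSup.symm

theorem lowerBaire_le_self (g : X → EReal) (x : X) : lowerBaire g x ≤ g x :=
  iSup₂_le fun _ hV => iInf₂_le x (mem_of_mem_nhds hV)

theorem le_upperBaire_self (g : X → EReal) (x : X) : g x ≤ upperBaire g x :=
  le_iInf₂ fun _ hV => le_iSup₂_of_le x (mem_of_mem_nhds hV) le_rfl

theorem lowerBaire_eq_self_iff {g : X → EReal} : lowerBaire g = g ↔ LowerSemicontinuous g := by
  rw [lowerSemicontinuous_iff_le_liminf, funext_iff]
  refine forall_congr' fun x => ?_
  rw [← lowerBaire_eq_liminf]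
  exact ⟨fun h => h.ge, (lowerBaire_le_self g x).antisymm⟩

theorem upperBaire_eq_self_iff {g : X → EReal} : upperBaire g = g ↔ UpperSemicontinuous g := by
  rw [upperSemicontinuous_iff_limsup_le, funext_iff]
  refine forall_congr' fun x => ?_
  rw [← upperBaire_eq_limsup]
  exact ⟨fun h => h.le, fun h => h.antisymm (le_upperBaire_self g x)⟩

end Baire

section TwoValued

variable {X : Type*} [TopologicalSpace X] {P N : Set X} [DecidablePred (· ∈ P)]
  [DecidablePred (· ∈ N)]

theorem lowerSemicontinuous_ite_of_isOpen {γ : Type*} [Preorder γ] {a b : γ} (hab : a ≤ b)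
    (hP : IsOpen P) :
    LowerSemicontinuous fun x => if x ∈ P then b else a := by
  intro x y hy
  by_cases hx : x ∈ P
  · filter_upwards [hP.mem_nhds hx] with x' hx'
    simpa [hx, hx'] using hy
  · refine Eventually.of_forall fun x' => ?_
    simp only [if_neg hx] at hy
    change y < if x' ∈ P then b else a
    split_ifs
    exacts [hy.trans_le hab, hy]

theorem upperSemicontinuous_ite_of_isOpen {γ : Type*} [Preorder γ] {a b : γ} (hab : a ≤ b)
    (hN : IsOpen N) :
    UpperSemicontinuous fun x => if x ∈ N then a else b :=
  lowerSemicontinuous_ite_of_isOpen (γ := γᵒᵈ) (a := OrderDual.toDual b) (b := OrderDual.toDual a)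
    hab hN

theorem isHCont_ite_of_isOpen {a b : EReal} (hab : a ≤ b) (hP : IsOpen P) (hN : IsOpen N)
    (hPN : Disjoint P N) (hclosure : (P ∪ N)ᶜ ⊆ closure P ∩ closure N) :
    IsHCont (fun x => if x ∈ P then b else a) (fun x => if x ∈ N then a else b) := by
  have hPc : Pᶜ ⊆ closure N := fun x hxP => by
    by_cases hxN : x ∈ N
    exacts [subset_closure hxN, (hclosure (by simp [hxP, hxN])).2]
  have hNc : Nᶜ ⊆ closure P := fun x hxN => by
    by_cases hxP : x ∈ P
    exacts [subset_closure hxP, (hclosure (by simp [hxP, hxN])).1]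
  refine ⟨⟨fun x => ?_, lowerBaire_eq_self_iff.2 (lowerSemicontinuous_ite_of_isOpen hab hP),
    upperBaire_eq_self_iff.2 (upperSemicontinuous_ite_of_isOpen hab hN)⟩, ?_⟩
  · by_cases hxP : x ∈ P
    · simp [hxP, hPN.notMem_of_mem_left hxP]
    · dsimp only
      split_ifs <;> simp [hab]
  rintro glo ghi ⟨hg, hglo, hghi⟩ hlo hhi
  have hglo_le : ∀ x ∉ P, glo x ≤ a := by
    have hN_le : N ⊆ glo ⁻¹' Iic a := fun y hy =>
      (hg y).trans ((hhi y).trans_eq (if_pos hy))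
    exact fun x hx => closure_minimal hN_le
      ((lowerBaire_eq_self_iff.1 hglo).isClosed_preimage a) (hPc hx)
  have hghi_ge : ∀ x ∉ N, b ≤ ghi x := by
    have hP_ge : P ⊆ ghi ⁻¹' Ici b := fun y hy =>
      ((if_pos hy).symm.trans_le (hlo y)).trans (hg y)
    exact fun x hx => closure_minimal hP_ge
      ((upperBaire_eq_self_iff.1 hghi).isClosed_preimage b) (hNc hx)
  refine ⟨funext fun x => (hlo x).antisymm' ?_, funext fun x => (hhi x).antisymm ?_⟩
  · by_cases hxP : x ∈ P
    · simpa [hxP, hPN.notMem_of_mem_left hxP] using (hg x).trans (hhi x)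
    · simpa [hxP] using hglo_le x hxP
  · by_cases hxN : x ∈ N
    · simpa [hxN, hPN.notMem_of_mem_right hxN] using (hlo x).trans (hg x)
    · simpa [hxN] using hghi_ge x hxN

end TwoValued

section SignChanges

open Real

theorem sin_add_mul_sin_sub (x y : ℝ) : sin (x + y) * sin (x - y) = sin x ^ 2 - sin y ^ 2 := by
  rw [sin_add, sin_sub]
  linear_combination sin x ^ 2 * sin_sq_add_cos_sq y - sin y ^ 2 * sin_sq_add_cos_sq x

theorem mem_closure_sin_pos_inter_sin_neg {a : ℝ} (ha : sin a = 0) :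
    a ∈ closure {x | 0 < sin x} ∩ closure {x | sin x < 0} := by
  have hsign : ∀ ε > 0, (∃ x, 0 < sin x ∧ dist a x < ε) ∧ ∃ y, sin y < 0 ∧ dist a y < ε := by
    intro ε hε
    set t := min (ε / 2) 1
    have ht : 0 < t := lt_min (half_pos hε) one_pos
    have hdist : dist a (a + t) < ε ∧ dist a (a - t) < ε := by
      simp only [dist_eq, sub_add_cancel_left, sub_sub_cancel, abs_neg, abs_of_pos ht]
      exact ⟨(min_le_left _ _).trans_lt (half_lt_self hε),
        (min_le_left _ _).trans_lt (half_lt_self hε)⟩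
    have hprod : sin (a + t) * sin (a - t) < 0 := by
      rw [sin_add_mul_sin_sub, ha]
      have hsin : 0 < sin t :=
        sin_pos_of_pos_of_lt_pi ht ((min_le_right _ _).trans_lt (by linarith [pi_gt_three]))
      nlinarith
    rcases mul_neg_iff.1 hprod with ⟨hpos, hneg⟩ | ⟨hneg, hpos⟩
    exacts [⟨⟨_, hpos, hdist.1⟩, _, hneg, hdist.2⟩, ⟨⟨_, hpos, hdist.2⟩, _, hneg, hdist.1⟩]
  exact ⟨Metric.mem_closure_iff.2 fun ε hε => (hsign ε hε).1,
    Metric.mem_closure_iff.2 fun ε hε => (hsign ε hε).2⟩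

theorem inv_mem_closure_of_mem_closure {A : Set ℝ} {a : ℝ} (ha : 0 < a) (h : a ∈ closure A) :
    a⁻¹ ∈ closure {θ | 0 < θ ∧ θ⁻¹ ∈ A} := by
  refine closure_mono ?_ (mem_closure_image (continuousAt_inv₀ ha.ne')
    (isOpen_Ioi.inter_closure ⟨ha, h⟩))
  rintro _ ⟨x, ⟨hx0, hx⟩, rfl⟩
  exact ⟨inv_pos.2 hx0, by rwa [inv_inv]⟩

theorem zero_mem_closure_setOf_sin_inv_eq_zero :
    (0 : ℝ) ∈ closure {θ | 0 < θ ∧ sin θ⁻¹ = 0} := by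
  refine mem_closure_of_tendsto (f := fun n : ℕ => (n * π)⁻¹)
    (tendsto_inv_atTop_zero.comp (tendsto_natCast_atTop_atTop.atTop_mul_const pi_pos)) ?_
  filter_upwards [eventually_gt_atTop 0] with n hn
  exact ⟨by positivity, by rw [inv_inv, sin_nat_mul_pi]⟩

theorem mem_closure_sin_inv_pos_inter_sin_inv_neg {θ : ℝ} (h0 : 0 ≤ θ) (h : sin θ⁻¹ = 0) :
    θ ∈ closure {θ | 0 < θ ∧ 0 < sin θ⁻¹} ∩ closure {θ | 0 < θ ∧ sin θ⁻¹ < 0} := by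
  have hzeros : {θ | 0 < θ ∧ sin θ⁻¹ = 0} ⊆
      closure {θ | 0 < θ ∧ 0 < sin θ⁻¹} ∩ closure {θ | 0 < θ ∧ sin θ⁻¹ < 0} := by
    rintro θ ⟨hθ, hs⟩
    obtain ⟨hpos, hneg⟩ := mem_closure_sin_pos_inter_sin_neg hs
    rw [← inv_inv θ]
    exact ⟨inv_mem_closure_of_mem_closure (inv_pos.2 hθ) hpos,
      inv_mem_closure_of_mem_closure (inv_pos.2 hθ) hneg⟩
  have hθ : θ ∈ closure {θ | 0 < θ ∧ sin θ⁻¹ = 0} := by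
    rcases h0.eq_or_lt with rfl | hpos
    exacts [zero_mem_closure_setOf_sin_inv_eq_zero, subset_closure ⟨hpos, h⟩]
  exact closure_minimal hzeros (isClosed_closure.inter isClosed_closure) hθ

theorem isOpen_preimage_sin_inv {U : Set ℝ} (hU : IsOpen U) (h0 : (0 : ℝ) ∉ U) :
    IsOpen ((fun θ => sin θ⁻¹) ⁻¹' U) := by
  refine isOpen_iff_mem_nhds.2 fun θ hθ => ContinuousAt.preimage_mem_nhds ?_ (hU.mem_nhds hθ)
  have hθ0 : θ ≠ 0 := by
    rintro rfl
    simp_all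
  fun_prop (disch := exact hθ0)

end SignChanges

theorem exists_sq_add_sq_eq_one_and_eq_sqrt_smul (p : ℝ × ℝ) :
    ∃ u : ℝ × ℝ, u.1 ^ 2 + u.2 ^ 2 = 1 ∧ p = √(p.1 ^ 2 + p.2 ^ 2) • u := by
  by_cases hp : p = 0
  · exact ⟨(1, 0), by norm_num, by simp [hp]⟩
  have hr : 0 < p.1 ^ 2 + p.2 ^ 2 := by
    have : p.1 ≠ 0 ∨ p.2 ≠ 0 := by
      contrapose! hp
      exact Prod.ext hp.1 hp.2
    rcases this with h | h <;> positivity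
  refine ⟨(√(p.1 ^ 2 + p.2 ^ 2))⁻¹ • p, ?_, ?_⟩
  · simp only [Prod.smul_fst, Prod.smul_snd, smul_eq_mul, mul_pow, inv_pow,
      Real.sq_sqrt hr.le, ← mul_add]
    exact inv_mul_cancel₀ hr.ne'
  · rw [smul_inv_smul₀ (Real.sqrt_pos.2 hr).ne']

/-- For a unit vector `u` on the ray through `p`, `θ ↦ √θ • u` is a continuous section of
`q ↦ q.1² + q.2²` passing through `p`. -/
theorem mem_closure_preimage_sq_add_sq {S : Set ℝ} (hS : S ⊆ Ici 0) {p : ℝ × ℝ}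
    (h : p.1 ^ 2 + p.2 ^ 2 ∈ closure S) :
    p ∈ closure ((fun q : ℝ × ℝ => q.1 ^ 2 + q.2 ^ 2) ⁻¹' S) := by
  obtain ⟨u, hu, hpu⟩ := exists_sq_add_sq_eq_one_and_eq_sqrt_smul p
  have hcont : ContinuousAt (fun θ : ℝ => √θ • u) (p.1 ^ 2 + p.2 ^ 2) := by fun_prop
  have himage := mem_closure_image hcont h
  rw [← hpu] at himage
  refine closure_mono ?_ himage
  rintro _ ⟨θ, hθ, rfl⟩
  have hθ0 : 0 ≤ θ := hS hθ
  simpa [mul_pow, Real.sq_sqrt hθ0, ← mul_add, hu] using hθ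

theorem mem_closure_sin_inv_sq_pos_inter_sin_inv_sq_neg {p : ℝ × ℝ}
    (h : Real.sin (p.1 ^ 2 + p.2 ^ 2)⁻¹ = 0) :
    p ∈ closure {p : ℝ × ℝ | 0 < Real.sin (p.1 ^ 2 + p.2 ^ 2)⁻¹} ∩
      closure {p : ℝ × ℝ | Real.sin (p.1 ^ 2 + p.2 ^ 2)⁻¹ < 0} := by
  obtain ⟨hpos, hneg⟩ := mem_closure_sin_inv_pos_inter_sin_inv_neg (by positivity) h
  exact ⟨closure_mono (fun q hq => hq.2)
      (mem_closure_preimage_sq_add_sq (fun θ hθ => hθ.1.le) hpos),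
    closure_mono (fun q hq => hq.2)
      (mem_closure_preimage_sq_add_sq (fun θ hθ => hθ.1.le) hneg)⟩

/-- Example A2: the interval-valued function β on ℝ², given by
β(x, y) = α(sin(1/(x² + y²))) for (x, y) ≠ (0, 0) and β(0, 0) = [−1, 1],
is Hausdorff-continuous. -/
theorem beta_hCont :
    IsHCont
      (fun p : ℝ × ℝ =>
        if p = 0 then (-1 : EReal)
        else if Real.sin (1 / (p.1 ^ 2 + p.2 ^ 2)) ≤ 0 then -1 else 1)
      (fun p : ℝ × ℝ =>
        if p = 0 then (1 : EReal)
        else if Real.sin (1 / (p.1 ^ 2 + p.2 ^ 2)) < 0 then -1 else 1) := by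
  have hab : (-1 : EReal) ≤ 1 := EReal.coe_le_coe_iff.2 (by norm_num : (-1 : ℝ) ≤ 1)
  convert isHCont_ite_of_isOpen (P := {p : ℝ × ℝ | 0 < Real.sin (p.1 ^ 2 + p.2 ^ 2)⁻¹})
    (N := {p | Real.sin (p.1 ^ 2 + p.2 ^ 2)⁻¹ < 0}) hab ?_ ?_ ?_ ?_ using 2 with p p
  -- `0⁻¹ = 0` in Lean, so the origin lies in neither set and gets the value `[-1, 1]`, as in β.
  · by_cases hp : p = 0 <;> simp [hp, ← not_le]
  · by_cases hp : p = 0 <;> simp [hp]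
  · exact (isOpen_preimage_sin_inv isOpen_Ioi (lt_irrefl (0 : ℝ))).preimage (by fun_prop)
  · exact (isOpen_preimage_sin_inv isOpen_Iio (lt_irrefl (0 : ℝ))).preimage (by fun_prop)
  · exact (Ioi_disjoint_Iio_same (a := (0 : ℝ))).preimage _
  · intro p hp
    exact mem_closure_sin_inv_sq_pos_inter_sin_inv_sq_neg
      (le_antisymm (not_lt.1 fun h => hp (Or.inl h)) (not_lt.1 fun h => hp (Or.inr h)))
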